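/- Let ℓ ≥ 3 be an integer and let H_{2,ℓ} be the graph described in the context. Then for every choice of vertices x_i ∈ {t_{i,1}, t_{i,2}} for i = 2,…,ℓ−1, the set {t_{1,1}, w, x_2,…,x_{ℓ−1}} is a total dominating set of H_{2,ℓ} of cardinality ℓ. -/

import Mathlib

/-- The three special vertices `u`, `v`, `w`. -/
inductive UVW : Type
  | u | v | w
deriving DecidableEq

/-- Vertices of `H_{2,ℓ}`: triangle vertices `t_{i,j}` as `Sum.inl (i,j)`
(0-indexed), plus `u`, `v`, `w`. -/
abbrev H2lV (l : ℕ) := (Fin (l - 1) × Fin 3) ⊕ UVW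

/-- Edge relation of `H_{2,ℓ}`: triangles on each `t_{i,·}`; edges `uv`, `uw`;
`v` adjacent to every `t_{i,j}`; `u` adjacent to `t_{1,1}` (0-indexed `(0,0)`)
and to all `t_{i,j}` with `i ≥ 2` (0-indexed `1 ≤ i.val`); `w` adjacent to
`t_{1,1}` and to `t_{i,1}`, `t_{i,2}` (0-indexed `j ∈ {0,1}`) for `i ≥ 2`;
`v` and `w` nonadjacent. -/
def H2lRel (l : ℕ) : H2lV l → H2lV l → Prop
  | .inl p, .inl q => p.1 = q.1
  | .inr .u, .inl p => (p.1.val = 0 ∧ p.2.val = 0) ∨ 1 ≤ p.1.val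
  | .inr .v, .inl _ => True
  | .inr .w, .inl p =>
      (p.1.val = 0 ∧ p.2.val = 0) ∨ (1 ≤ p.1.val ∧ (p.2.val = 0 ∨ p.2.val = 1))
  | .inr .u, .inr .v => True
  | .inr .u, .inr .w => True
  | _, _ => False

/-- The graph `H_{2,ℓ}`. -/
def H2l (l : ℕ) : SimpleGraph (H2lV l) := SimpleGraph.fromRel (H2lRel l)

/-- `D` is a total dominating set of `G`. -/
def IsTotalDomSet {V : Type*} (G : SimpleGraph V) (D : Finset V) : Prop :=
  ∀ v : V, ∃ d ∈ D, G.Adj v d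

/-!
The vertex `t_{1,1}` dominates `u`, `v`, `w` and the rest of its own triangle, `w` dominates
`t_{1,1}` and every chosen `x_i`, and `x_i` dominates the other two vertices of its triangle.
The `ℓ - 2` vertices `x_i` lie in distinct triangles, so together with `t_{1,1}` and `w`
there are exactly `ℓ` of them.
-/

open Finset

theorem Fin.card_filter_one_le_val (n : ℕ) : #{i : Fin n | 1 ≤ i.val} = n - 1 := by
  have hlt := Fin.card_filter_val_lt (n := n) (m := 1)
  have hsplit := card_filter_add_card_filter_not (s := (univ : Finset (Fin n))) fun i => i.val < 1
  simp only [not_lt, card_univ, Fintype.card_fin] at hsplit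
  omega

namespace H2l

variable {l : ℕ}

/-- `t_{1,1}` in the paper's 1-based indexing. -/
def t11 (h : 0 < l - 1) : H2lV l := .inl (⟨0, h⟩, 0)

/-- The vertices `x_i = t_{i, c i}` for `i = 2, …, ℓ - 1` (1-based). -/
def chosen (c : Fin (l - 1) → Fin 3) : Finset (H2lV l) :=
  (univ.filter fun i : Fin (l - 1) => 1 ≤ i.val).image fun i => .inl (i, c i)

theorem adj_inl_inl {p q : Fin (l - 1) × Fin 3} :
    (H2l l).Adj (.inl p) (.inl q) ↔ p.1 = q.1 ∧ p.2 ≠ q.2 := by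
  obtain ⟨i, j⟩ := p
  obtain ⟨i', j'⟩ := q
  simp only [H2l, SimpleGraph.fromRel_adj, H2lRel, ne_eq, Sum.inl.injEq, Prod.mk.injEq]
  grind

theorem adj_inr_t11 (h : 0 < l - 1) (a : UVW) : (H2l l).Adj (.inr a) (t11 h) := by
  cases a <;> simp [H2l, H2lRel, t11]

theorem adj_inl_w {p : Fin (l - 1) × Fin 3} :
    (H2l l).Adj (.inl p) (.inr .w) ↔
      (p.1.val = 0 ∧ p.2.val = 0) ∨ (1 ≤ p.1.val ∧ (p.2.val = 0 ∨ p.2.val = 1)) := by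
  simp [H2l, H2lRel]

theorem mem_chosen {c : Fin (l - 1) → Fin 3} {i : Fin (l - 1)} (hi : 1 ≤ i.val) :
    (.inl (i, c i) : H2lV l) ∈ chosen c :=
  mem_image.2 ⟨i, by simpa using hi, rfl⟩

theorem isTotalDomSet (h : 0 < l - 1) {c : Fin (l - 1) → Fin 3}
    (hc : ∀ i, 1 ≤ i.val → (c i).val = 0 ∨ (c i).val = 1) :
    IsTotalDomSet (H2l l) (insert (t11 h) (insert (.inr .w) (chosen c))) := by
  have ht11 : t11 h ∈ insert (t11 h) (insert (.inr .w) (chosen c)) := mem_insert_self _ _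
  have hw : .inr .w ∈ insert (t11 h) (insert (.inr .w) (chosen c)) := by simp
  rintro (⟨i, j⟩ | a)
  · rcases Nat.eq_zero_or_pos i.val with hi | hi
    · by_cases hj : j = 0
      · exact ⟨_, hw, adj_inl_w.2 (.inl ⟨hi, by simp [hj]⟩)⟩
      · exact ⟨_, ht11, adj_inl_inl.2 ⟨Fin.ext hi, hj⟩⟩
    · by_cases hj : j = c i
      · exact ⟨_, hw, adj_inl_w.2 (.inr ⟨hi, hj ▸ hc i hi⟩)⟩
      · exact ⟨_, mem_insert_of_mem (mem_insert_of_mem (mem_chosen hi)),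
          adj_inl_inl.2 ⟨rfl, hj⟩⟩
  · exact ⟨_, ht11, adj_inr_t11 h a⟩

theorem card_chosen (c : Fin (l - 1) → Fin 3) : #(chosen c) = l - 2 := by
  have hinj : Function.Injective fun i : Fin (l - 1) => (.inl (i, c i) : H2lV l) :=
    fun a b hab => congrArg Prod.fst (Sum.inl_injective hab)
  rw [chosen, card_image_of_injective _ hinj, Fin.card_filter_one_le_val]
  omega

theorem t11_notMem_chosen (h : 0 < l - 1) (c : Fin (l - 1) → Fin 3) : t11 h ∉ chosen c := by
  simp only [t11, chosen, mem_image, mem_filter, mem_univ, true_and, Sum.inl.injEq,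
    Prod.mk.injEq, not_exists, not_and]
  rintro i hi rfl
  simp at hi

theorem card_insert_t11_w (h : 0 < l - 1) (c : Fin (l - 1) → Fin 3) :
    #(insert (t11 h) (insert (.inr .w) (chosen c))) = l := by
  rw [card_insert_of_notMem, card_insert_of_notMem, card_chosen]
  · omega
  · simp [chosen]
  · simpa [t11] using t11_notMem_chosen h c

end H2l

/-- For every choice `x_i ∈ {t_{i,1}, t_{i,2}}` for `i = 2, …, ℓ-1` (0-indexed
`1 ≤ i.val`), the set `{t_{1,1}, w, x_2, …, x_{ℓ-1}}` is a total dominating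
set of `H_{2,ℓ}` of cardinality `ℓ`. -/
theorem stmt12 (l : ℕ) (hl : 3 ≤ l)
    (c : Fin (l - 1) → Fin 3) (hc : ∀ i, 1 ≤ i.val → (c i).val = 0 ∨ (c i).val = 1)
    (D : Finset (H2lV l))
    (hDdef : D = insert (Sum.inl ((⟨0, by omega⟩ : Fin (l - 1)), 0))
      (insert (Sum.inr UVW.w)
        (Finset.image (fun i => Sum.inl (i, c i))
          (Finset.univ.filter (fun i : Fin (l - 1) => 1 ≤ i.val))))) :
    IsTotalDomSet (H2l l) D ∧ D.card = l := by
  subst hDdef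
  exact ⟨H2l.isTotalDomSet _ hc, H2l.card_insert_t11_w _ c⟩
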